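/- Fix m ∈ ℤ \ {0}, V₀ > 0, δ ∈ (0,1), C₀ > 0 and h ∈ (0, π/8). There exists ν₀ > 0 such that for every real ν ≥ ν₀ the following holds. Let S_ν = {ρ ∈ ℂ : −(2 log ν)/ν ≤ Re ρ ≤ 0, −π ≤ Im ρ ≤ 0}, and let w, g₁, g₃ be holomorphic on an open neighborhood of S_ν with |w(ρ)²| ≤ 1 − δ, |g₁(ρ)| ≤ C₀/ν, and |g₃(ρ)| ≤ C₀/ν for all ρ ∈ S_ν. Define f(ρ) = ν² (1 − w(ρ)²) e^{2νρ} (1 + g₁(ρ)) − i m V₀/4 − g₃(ρ). Then: (i) for every k ∈ ℤ such that Im ρ_k ∈ (−π + 2h, −2h), where ρ_k = (1/(2ν)) log(|m| V₀/4) − (log ν)/ν + i(π/ν)(k + sgn(m)/4), the function f has at least one zero ρ with −(2 log ν)/ν < Re ρ < 0 and |Im ρ − Im ρ_k| < π/ν; (ii) f has at least ν(π − 4h)/π − 2 zeros, counted with multiplicity, in the open rectangle {ρ : −(2 log ν)/ν < Re ρ < 0, −π + 2h < Im ρ < −2h}. -/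

import Mathlib

/-!
Put `c = i m V₀/4` and `A = (1 - w²)(1 + g₁)`, so that `f = ν² e^{2νρ} A - c - g₃` with
`‖A - 1‖ ≤ 1 - δ + O(1/ν) < 1`. Since `ν² e^{2νρ_k} = c`, on the rectangle
`-(2 log ν)/ν < Re ρ < 0`, `|Im ρ - Im ρ_k| < π/(2ν)` we have `‖f‖ ≥ ‖c‖ - O(1/ν)` on the boundary:
on the horizontal sides `ν² e^{2νρ}` is a negative multiple of `c` and `Re A > 0`, on the left side
`ν² e^{2νρ}` has modulus `ν⁻²`, on the right side modulus `ν²`. At the centre,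
`‖f(ρ_k)‖ ≤ ‖c‖ (1 - δ/2) + O(1/ν)`, so the minimum modulus principle gives a zero in each
rectangle. These rectangles are disjoint and about `ν (π - 4h)/π` of them fit into the strip
`-π + 2h < Im ρ < -2h`. The orders of vanishing are finite (`df` is `ℕ`-valued), so the zeros in
the compact closed strip are isolated, hence finite in number, and the count follows.
-/

open Complex Real Set Filter Topology

theorem Complex.exp_eq_neg_exp_re_of_abs_im_eq_pi {w : ℂ} (h : |w.im| = π) :
    exp w = -(Real.exp w.re : ℂ) := by
  have hcos : Real.cos w.im = -1 := by rw [← Real.cos_abs, h, Real.cos_pi]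
  have hsin : Real.sin w.im = 0 := by
    have := Real.sin_sq w.im
    rw [hcos] at this
    exact pow_eq_zero_iff two_ne_zero |>.1 (by linarith)
  rw [exp_eq_exp_re_mul_sin_add_cos, ← ofReal_cos, ← ofReal_sin, hcos, hsin, ofReal_exp]
  simp

theorem Complex.norm_sq_mul_exp_two_mul (ν : ℝ) (z : ℂ) :
    ‖(ν : ℂ) ^ 2 * exp (2 * ν * z)‖ = ν ^ 2 * Real.exp (2 * ν * z.re) := by
  simp [norm_exp]

theorem Complex.one_sub_le_re_of_norm_sub_one_le {α : ℂ} {q : ℝ} (h : ‖α - 1‖ ≤ q) :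
    1 - q ≤ α.re := by
  have := neg_abs_le (α - 1).re
  have := abs_re_le_norm (α - 1)
  simp only [sub_re, one_re] at *
  linarith

theorem norm_le_norm_sq_mul_exp_mul_sub {ν : ℝ} {z₀ z c α : ℂ} (hν : 0 < ν)
    (hc : (ν : ℂ) ^ 2 * exp (2 * ν * z₀) = c) (him : |z.im - z₀.im| = π / (2 * ν))
    (hα : 0 ≤ α.re) :
    ‖c‖ ≤ ‖(ν : ℂ) ^ 2 * exp (2 * ν * z) * α - c‖ := by
  set u := Real.exp (2 * ν * (z - z₀)).re
  have hexp : Complex.exp (2 * ν * (z - z₀)) = -(u : ℂ) := by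
    refine exp_eq_neg_exp_re_of_abs_im_eq_pi ?_
    have : (2 * (ν : ℂ) * (z - z₀)).im = 2 * ν * (z.im - z₀.im) := by simp
    rw [this, abs_mul, him, abs_of_pos (by positivity)]
    field_simp
  have hsplit : (ν : ℂ) ^ 2 * exp (2 * ν * z) * α - c = -c * (1 + u * α) := by
    rw [← hc, show 2 * (ν : ℂ) * z = 2 * ν * z₀ + 2 * ν * (z - z₀) by ring, Complex.exp_add, hexp]
    ring
  have hre : 1 ≤ (1 + (u : ℂ) * α).re := by
    simpa using mul_nonneg (Real.exp_pos _).le hα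
  rw [hsplit, norm_mul, norm_neg]
  exact le_mul_of_one_le_right (norm_nonneg c) (hre.trans (re_le_norm _))

theorem exists_zero_of_norm_lt_of_le_norm_on_frontier {E : Type*} [NormedAddCommGroup E]
    [NormedSpace ℂ E] [Nontrivial E] [FiniteDimensional ℂ E] {f : E → ℂ} {R : Set E}
    (hR : Bornology.IsBounded R) (hf : DiffContOnCl ℂ f R) {z₀ : E} (hz₀ : z₀ ∈ R) {L : ℝ}
    (hfront : ∀ z ∈ frontier R, L ≤ ‖f z‖) (hlt : ‖f z₀‖ < L) :
    ∃ z ∈ R, f z = 0 := by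
  by_contra! hne
  have hne' : ∀ z ∈ closure R, f z ≠ 0 := by
    intro z hz h0
    rcases (closure_eq_self_union_frontier R ▸ hz : z ∈ R ∪ frontier R) with hzR | hzR
    · exact hne z hzR h0
    · have := hfront z hzR
      rw [h0, norm_zero] at this
      linarith [norm_nonneg (f z₀)]
  have hinv : DiffContOnCl ℂ (fun z => (f z)⁻¹) R :=
    ⟨hf.differentiableOn.inv fun z hz => hne z hz, hf.continuousOn.inv₀ hne'⟩
  obtain ⟨z, hzfr, hmax⟩ := Complex.exists_mem_frontier_isMaxOn_norm hR ⟨z₀, hz₀⟩ hinv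
  have hle : ‖f z₀‖⁻¹ ≤ ‖f z‖⁻¹ := by simpa using hmax (subset_closure hz₀)
  have hz₀pos : 0 < ‖f z₀‖ := norm_pos_iff.2 (hne z₀ hz₀)
  have := inv_le_inv₀ hz₀pos (norm_pos_iff.2 (hne' z (frontier_subset_closure hzfr))) |>.1 hle
  linarith [hfront z hzfr]

theorem le_norm_sq_mul_exp_mul_sub_sub_of_mem_frontier {ν a b q ε : ℝ} {z₀ c z α γ : ℂ}
    (hν : 0 < ν) (hab : a < b) (hc : (ν : ℂ) ^ 2 * exp (2 * ν * z₀) = c)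
    (hz : z ∈ frontier (Ioo a b ×ℂ Ioo (z₀.im - π / (2 * ν)) (z₀.im + π / (2 * ν))))
    (hα : ‖α - 1‖ ≤ q) (hγ : ‖γ‖ ≤ ε) (hq : q < 1)
    (hright : 2 * ‖c‖ ≤ ν ^ 2 * Real.exp (2 * ν * b) * (1 - q)) :
    ‖c‖ - ε - 2 * (ν ^ 2 * Real.exp (2 * ν * a)) ≤
      ‖(ν : ℂ) ^ 2 * exp (2 * ν * z) * α - c - γ‖ := by
  have hr : 0 < π / (2 * ν) := by positivity
  have ha : 0 ≤ ν ^ 2 * Real.exp (2 * ν * a) := by positivity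
  have hF := norm_sub_norm_le ((ν : ℂ) ^ 2 * exp (2 * ν * z) * α - c) γ
  have hX := norm_sub_norm_le ((ν : ℂ) ^ 2 * exp (2 * ν * z) * α) c
  have hX' := norm_sub_norm_le c ((ν : ℂ) ^ 2 * exp (2 * ν * z) * α)
  rw [norm_sub_rev] at hX'
  rw [norm_mul (_ * _), norm_sq_mul_exp_two_mul] at hX hX'
  rw [frontier_reProdIm, closure_Ioo hab.ne, frontier_Ioo hab, frontier_Ioo (by linarith)] at hz
  rcases hz with ⟨-, him⟩ | ⟨hre, -⟩
  · have him' : |z.im - z₀.im| = π / (2 * ν) := by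
      obtain him | him : z.im = z₀.im - π / (2 * ν) ∨ z.im = z₀.im + π / (2 * ν) := him <;>
        simp [him, abs_of_pos hr]
    have := norm_le_norm_sq_mul_exp_mul_sub hν hc him'
      ((sub_nonneg.2 hq.le).trans (one_sub_le_re_of_norm_sub_one_le hα))
    linarith
  · obtain hre | hre : z.re = a ∨ z.re = b := hre <;> rw [hre] at hX hX'
    · have : ‖α‖ ≤ 2 := by linarith [norm_le_norm_sub_add α 1, norm_one (α := ℂ)]
      nlinarith [mul_le_mul_of_nonneg_left this ha]
    · have : 1 - q ≤ ‖α‖ := (one_sub_le_re_of_norm_sub_one_le hα).trans (re_le_norm _)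
      nlinarith [mul_le_mul_of_nonneg_left this (by positivity : 0 ≤ ν ^ 2 * Real.exp (2 * ν * b))]

theorem exists_zero_sq_mul_exp_mul_sub {ν a b q ε : ℝ} {z₀ c : ℂ} {A g : ℂ → ℂ} {K : Set ℂ}
    (hν : 0 < ν) (hz₀ : z₀.re ∈ Ioo a b) (hc : (ν : ℂ) ^ 2 * exp (2 * ν * z₀) = c)
    (hK : Icc a b ×ℂ Icc (z₀.im - π / (2 * ν)) (z₀.im + π / (2 * ν)) ⊆ K)
    (hA : DifferentiableOn ℂ A K) (hg : DifferentiableOn ℂ g K)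
    (hAq : ∀ z ∈ K, ‖A z - 1‖ ≤ q) (hgε : ∀ z ∈ K, ‖g z‖ ≤ ε)
    (hleft : 2 * (ν ^ 2 * Real.exp (2 * ν * a)) + 2 * ε < ‖c‖ * (1 - q))
    (hright : 2 * ‖c‖ ≤ ν ^ 2 * Real.exp (2 * ν * b) * (1 - q)) :
    ∃ z ∈ Ioo a b ×ℂ Ioo (z₀.im - π / (2 * ν)) (z₀.im + π / (2 * ν)),
      (ν : ℂ) ^ 2 * exp (2 * ν * z) * A z - c - g z = 0 := by
  have hab : a < b := hz₀.1.trans hz₀.2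
  have hr : 0 < π / (2 * ν) := by positivity
  have hcl : closure (Ioo a b ×ℂ Ioo (z₀.im - π / (2 * ν)) (z₀.im + π / (2 * ν))) =
      Icc a b ×ℂ Icc (z₀.im - π / (2 * ν)) (z₀.im + π / (2 * ν)) := by
    rw [closure_reProdIm, closure_Ioo hab.ne, closure_Ioo (by linarith)]
  have hz₀R : z₀ ∈ Ioo a b ×ℂ Ioo (z₀.im - π / (2 * ν)) (z₀.im + π / (2 * ν)) :=
    ⟨hz₀, by simp [hν, pi_pos]⟩
  have hz₀K : z₀ ∈ K := hK (hcl ▸ subset_closure hz₀R)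
  have hε : 0 ≤ ε := (norm_nonneg _).trans (hgε z₀ hz₀K)
  have hq : 0 < 1 - q :=
    pos_of_mul_pos_right (by nlinarith [Real.exp_pos (2 * ν * a)]) (norm_nonneg c)
  refine exists_zero_of_norm_lt_of_le_norm_on_frontier
    ((Metric.isBounded_Ioo _ _).reProdIm (Metric.isBounded_Ioo _ _))
    (DifferentiableOn.diffContOnCl (by rw [hcl]; have := hA.mono hK; have := hg.mono hK; fun_prop))
    hz₀R (L := ‖c‖ - ε - 2 * (ν ^ 2 * Real.exp (2 * ν * a))) (fun z hz => ?_) ?_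
  · have hzK : z ∈ K := hK (hcl ▸ frontier_subset_closure hz)
    exact le_norm_sq_mul_exp_mul_sub_sub_of_mem_frontier hν hab hc hz (hAq z hzK) (hgε z hzK)
      (by linarith) hright
  · calc ‖(ν : ℂ) ^ 2 * exp (2 * ν * z₀) * A z₀ - c - g z₀‖ = ‖c * (A z₀ - 1) - g z₀‖ := by
          rw [hc]; ring_nf
      _ ≤ ‖c‖ * q + ε := by
          refine (norm_sub_le _ _).trans (add_le_add ?_ (hgε z₀ hz₀K))
          rw [norm_mul]
          exact mul_le_mul_of_nonneg_left (hAq z₀ hz₀K) (norm_nonneg c)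
      _ < _ := by linarith

theorem norm_one_sub_sq_mul_one_add_sub_one_le {W G : ℂ} {δ ε : ℝ} (hδ : 0 ≤ δ)
    (hW : ‖W ^ 2‖ ≤ 1 - δ) (hG : ‖G‖ ≤ ε) :
    ‖(1 - W ^ 2) * (1 + G) - 1‖ ≤ 1 - δ + 2 * ε := by
  have h1W : ‖1 - W ^ 2‖ ≤ 2 := by linarith [norm_sub_le (1 : ℂ) (W ^ 2), norm_one (α := ℂ)]
  calc ‖(1 - W ^ 2) * (1 + G) - 1‖ = ‖(1 - W ^ 2) * G - W ^ 2‖ := by ring_nf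
    _ ≤ ‖1 - W ^ 2‖ * ‖G‖ + ‖W ^ 2‖ := (norm_sub_le _ _).trans_eq (by rw [norm_mul])
    _ ≤ 2 * ε + (1 - δ) := by gcongr
    _ = 1 - δ + 2 * ε := by ring

/-- The paper's `ρ_k`. -/
noncomputable def resonancePoint (m : ℤ) (V₀ ν : ℝ) (k : ℤ) : ℂ :=
  ((1 / (2 * ν)) * Real.log (|(m : ℝ)| * V₀ / 4) - Real.log ν / ν : ℝ) +
    ((π / ν) * (k + (Int.sign m : ℝ) / 4) : ℝ) * I

@[simp]
theorem resonancePoint_re (m : ℤ) (V₀ ν : ℝ) (k : ℤ) :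
    (resonancePoint m V₀ ν k).re =
      (1 / (2 * ν)) * Real.log (|(m : ℝ)| * V₀ / 4) - Real.log ν / ν := by
  simp [resonancePoint]

@[simp]
theorem resonancePoint_im (m : ℤ) (V₀ ν : ℝ) (k : ℤ) :
    (resonancePoint m V₀ ν k).im = (π / ν) * (k + (Int.sign m : ℝ) / 4) := by
  simp [resonancePoint]

theorem sq_mul_exp_resonancePoint {m : ℤ} (hm : m ≠ 0) {V₀ ν : ℝ} (hV₀ : 0 < V₀) (hν : 0 < ν)
    (k : ℤ) : (ν : ℂ) ^ 2 * exp (2 * ν * resonancePoint m V₀ ν k) = I * m * V₀ / 4 := by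
  have hM : 0 < |(m : ℝ)| * V₀ / 4 := by positivity
  have hν' : (ν : ℂ) ≠ 0 := by exact_mod_cast hν.ne'
  have harg : 2 * (ν : ℂ) * resonancePoint m V₀ ν k =
      (Real.log (|(m : ℝ)| * V₀ / 4 / ν ^ 2) : ℂ) + (Int.sign m * (π / 2) : ℝ) * I +
        k * (2 * π * I) := by
    rw [Real.log_div hM.ne' (by positivity), Real.log_pow, resonancePoint]
    push_cast
    field_simp
    ring
  have hsign : exp ((Int.sign m * (π / 2) : ℝ) * I) = Int.sign m * I := by
    rcases hm.lt_or_gt with hneg | hpos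
    · simpa [Int.sign_eq_neg_one_of_neg hneg, neg_div] using exp_neg_pi_div_two_mul_I
    · simp [Int.sign_eq_one_of_pos hpos]
  have hm' : (Int.sign m : ℂ) * |(m : ℝ)| = m := by exact_mod_cast Int.sign_mul_abs m
  rw [harg, Complex.exp_add, Complex.exp_add, exp_int_mul_two_pi_mul_I, ← ofReal_exp,
    Real.exp_log (by positivity), hsign, ← hm']
  push_cast
  field_simp

theorem resonancePoint_re_mem_Ioo {m : ℤ} {V₀ ν : ℝ} (hν : 0 < ν)
    (hlo : (ν ^ 2)⁻¹ < |(m : ℝ)| * V₀ / 4) (hhi : |(m : ℝ)| * V₀ / 4 < ν ^ 2) (k : ℤ) :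
    (resonancePoint m V₀ ν k).re ∈ Ioo (-(2 * Real.log ν) / ν) 0 := by
  have hlo' := Real.log_lt_log (by positivity) hlo
  have hhi' := Real.log_lt_log ((inv_pos.2 (by positivity)).trans hlo) hhi
  rw [Real.log_inv, Real.log_pow] at hlo'
  rw [Real.log_pow] at hhi'
  push_cast at hlo' hhi'
  rw [resonancePoint_re]
  constructor
  · rw [div_lt_iff₀ hν]
    field_simp
    linarith
  · rw [sub_neg]
    field_simp
    linarith

theorem exists_zero_near_resonancePoint {m : ℤ} (hm : m ≠ 0) {V₀ δ ε ν : ℝ} (hV₀ : 0 < V₀)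
    (hδ : 0 ≤ δ) (hν : 0 < ν) (hlo : (ν ^ 2)⁻¹ < |(m : ℝ)| * V₀ / 4)
    (hhi : |(m : ℝ)| * V₀ / 4 < ν ^ 2)
    (hleft : 2 * (ν ^ 2)⁻¹ + 2 * ε < |(m : ℝ)| * V₀ / 4 * (δ - 2 * ε))
    (hright : 2 * (|(m : ℝ)| * V₀ / 4) ≤ ν ^ 2 * (δ - 2 * ε))
    {K : Set ℂ} {w g₁ g₃ : ℂ → ℂ} (hw : DifferentiableOn ℂ w K) (hg₁ : DifferentiableOn ℂ g₁ K)
    (hg₃ : DifferentiableOn ℂ g₃ K) (hwK : ∀ z ∈ K, ‖w z ^ 2‖ ≤ 1 - δ)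
    (hg₁K : ∀ z ∈ K, ‖g₁ z‖ ≤ ε) (hg₃K : ∀ z ∈ K, ‖g₃ z‖ ≤ ε) (k : ℤ)
    (hK : Icc (-(2 * Real.log ν) / ν) 0 ×ℂ
      Icc ((π / ν) * (k + (Int.sign m : ℝ) / 4) - π / (2 * ν))
        ((π / ν) * (k + (Int.sign m : ℝ) / 4) + π / (2 * ν)) ⊆ K) :
    ∃ ρ ∈ Ioo (-(2 * Real.log ν) / ν) 0 ×ℂ
      Ioo ((π / ν) * (k + (Int.sign m : ℝ) / 4) - π / (2 * ν))
        ((π / ν) * (k + (Int.sign m : ℝ) / 4) + π / (2 * ν)),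
      (ν : ℂ) ^ 2 * (1 - w ρ ^ 2) * exp (2 * ν * ρ) * (1 + g₁ ρ) - I * m * V₀ / 4 - g₃ ρ = 0 := by
  have hcnorm : ‖I * m * V₀ / 4‖ = |(m : ℝ)| * V₀ / 4 := by simp [abs_of_pos hV₀]
  have hleftEdge : ν ^ 2 * Real.exp (2 * ν * (-(2 * Real.log ν) / ν)) = (ν ^ 2)⁻¹ := by
    rw [show 2 * ν * (-(2 * Real.log ν) / ν) = -Real.log (ν ^ 4) by
      rw [Real.log_pow]; field_simp; push_cast; ring, Real.exp_neg, Real.exp_log (by positivity)]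
    field_simp
  obtain ⟨ρ, hρ, h0⟩ := exists_zero_sq_mul_exp_mul_sub (A := fun z => (1 - w z ^ 2) * (1 + g₁ z))
    (q := 1 - δ + 2 * ε) hν (resonancePoint_re_mem_Ioo hν hlo hhi k)
    (sq_mul_exp_resonancePoint hm hV₀ hν k) (by simpa using hK) (by fun_prop) hg₃
    (fun z hz => norm_one_sub_sq_mul_one_add_sub_one_le hδ (hwK z hz) (hg₁K z hz)) hg₃K
    (by rw [hleftEdge, hcnorm]; linarith) (by rw [hcnorm]; simp; linarith)
  exact ⟨ρ, by simpa using hρ, by rw [← h0]; ring⟩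

theorem IsCompact.finite_zeros_of_analyticOrderAt_ne_top {𝕜 E : Type*}
    [NontriviallyNormedField 𝕜] [NormedAddCommGroup E] [NormedSpace 𝕜 E] {f : 𝕜 → E}
    {K : Set 𝕜} (hK : IsCompact K) (hf : ∀ z ∈ K, AnalyticAt 𝕜 f z)
    (hord : ∀ z ∈ K, analyticOrderAt f z ≠ ⊤) : {z ∈ K | f z = 0}.Finite := by
  by_contra hinf
  obtain ⟨x, hxK, hacc⟩ := Set.Infinite.exists_accPt_of_subset_isCompact hinf hK fun z hz => hz.1
  refine hord x hxK (analyticOrderAt_eq_top.2 ((hf x hxK).frequently_zero_iff_eventually_zero.1 ?_))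
  rw [accPt_iff_frequently] at hacc
  exact frequently_nhdsWithin_iff.2 (hacc.mono fun z hz => ⟨hz.2.2, hz.1⟩)

theorem card_le_finsum_mem_of_injOn {α ι : Type*} {T : Set α} {d : α → ℕ} {s : Finset ι}
    {Z : ι → α} (hfin : (T ∩ Function.support d).Finite)
    (hZ : ∀ i ∈ s, Z i ∈ T ∧ d (Z i) ≠ 0) (hinj : InjOn Z s) :
    (s.card : ℝ) ≤ ∑ᶠ z ∈ T, (d z : ℝ) := by
  classical
  have hfin' : (T ∩ Function.support fun z => (d z : ℝ)).Finite :=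
    hfin.subset fun z hz => ⟨hz.1, by simpa using hz.2⟩
  have himage : s.image Z ⊆ hfin'.toFinset := by
    simp only [Finset.image_subset_iff, Finite.mem_toFinset]
    exact fun i hi => ⟨(hZ i hi).1, by simpa using (hZ i hi).2⟩
  rw [finsum_mem_eq_sum _ hfin', ← Finset.card_image_of_injOn hinj]
  calc ((s.image Z).card : ℝ) ≤ ∑ z ∈ s.image Z, (d z : ℝ) := by
        simpa using Finset.card_nsmul_le_sum (s.image Z) (fun z => (d z : ℝ)) 1 (by
          simp only [Finset.mem_image, forall_exists_index, and_imp, forall_apply_eq_imp_iff₂]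
          exact fun i hi => by exact_mod_cast Nat.one_le_iff_ne_zero.2 (hZ i hi).2)
    _ ≤ ∑ z ∈ hfin'.toFinset, (d z : ℝ) :=
        Finset.sum_le_sum_of_subset_of_nonneg himage fun _ _ _ => by positivity

theorem sub_sub_one_le_card_Icc_ceil_floor (a b : ℝ) :
    b - a - 1 ≤ ((Finset.Icc ⌈a⌉ ⌊b⌋).card : ℝ) := by
  rw [Int.card_Icc]
  have h : ((⌊b⌋ + 1 - ⌈a⌉ : ℤ) : ℝ) ≤ (((⌊b⌋ + 1 - ⌈a⌉).toNat : ℤ) : ℝ) :=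
    Int.cast_le.2 (Int.self_le_toNat _)
  push_cast at h
  linarith [Int.sub_one_lt_floor b, Int.ceil_lt_add_one a]

theorem mem_Icc_of_mem_Icc_ceil_floor {ν t α β : ℝ} (hν : 0 < ν) {k : ℤ}
    (hk : k ∈ Finset.Icc ⌈ν * α / π + 1 / 2 - t⌉ ⌊ν * β / π - 1 / 2 - t⌋) :
    π / ν * (k + t) ∈ Icc (α + π / (2 * ν)) (β - π / (2 * ν)) := by
  obtain ⟨hk₁, hk₂⟩ := Finset.mem_Icc.1 hk
  have h₁ := Int.ceil_le.1 hk₁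
  have h₂ := Int.le_floor.1 hk₂
  constructor
  · calc α + π / (2 * ν) = π / ν * (ν * α / π + 1 / 2 - t + t) := by field_simp; ring
      _ ≤ π / ν * (k + t) := by gcongr
  · calc π / ν * (k + t) ≤ π / ν * (ν * β / π - 1 / 2 - t + t) := by gcongr
      _ = β - π / (2 * ν) := by field_simp; ring

theorem eq_of_abs_sub_lt_of_abs_sub_lt {ν t x : ℝ} (hν : 0 < ν) {k k' : ℤ}
    (hk : |x - π / ν * (k + t)| < π / (2 * ν)) (hk' : |x - π / ν * (k' + t)| < π / (2 * ν)) :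
    k = k' := by
  have hsep : |π / ν * ((k : ℝ) - k')| < π / ν := by
    calc |π / ν * ((k : ℝ) - k')| = |x - π / ν * (k' + t) - (x - π / ν * (k + t))| := by ring_nf
      _ ≤ |x - π / ν * (k' + t)| + |x - π / ν * (k + t)| := abs_sub _ _
      _ < π / (2 * ν) + π / (2 * ν) := add_lt_add hk' hk
      _ = π / ν := by ring
  rw [abs_mul, abs_of_pos (by positivity), mul_lt_iff_lt_one_right (by positivity)] at hsep
  exact sub_eq_zero.1 (Int.abs_lt_one_iff.1 (by exact_mod_cast hsep))

theorem sub_two_le_finsum_of_zeros_near {F : ℂ → ℂ} {df : ℂ → ℕ} {T K : Set ℂ} {ν t α β : ℝ}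
    (hν : 0 < ν) (hK : IsCompact K) (hTK : T ⊆ K) (hF : ∀ z ∈ K, AnalyticAt ℂ F z)
    (hdf : ∀ z, AnalyticAt ℂ F z → (df z : ℕ∞) = analyticOrderAt F z)
    (hzero : ∀ k : ℤ, π / ν * (k + t) ∈ Icc (α + π / (2 * ν)) (β - π / (2 * ν)) →
      ∃ z ∈ T, F z = 0 ∧ |z.im - π / ν * (k + t)| < π / (2 * ν)) :
    ν * (β - α) / π - 2 ≤ ∑ᶠ z ∈ T, (df z : ℝ) := by
  have hdf0 : ∀ z ∈ K, df z ≠ 0 ↔ F z = 0 := fun z hz => by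
    rw [← (hF z hz).analyticOrderAt_ne_zero, ← hdf z (hF z hz), Nat.cast_ne_zero]
  have hzeros : {z ∈ K | F z = 0}.Finite := hK.finite_zeros_of_analyticOrderAt_ne_top hF
    fun z hz => hdf z (hF z hz) ▸ ENat.natCast_ne_top _
  have hfin : (T ∩ Function.support df).Finite :=
    hzeros.subset fun z hz => ⟨hTK hz.1, (hdf0 z (hTK hz.1)).1 hz.2⟩
  choose! Z hZT hZ0 hZim using fun k hk => hzero k (mem_Icc_of_mem_Icc_ceil_floor hν hk)
  calc ν * (β - α) / π - 2 = (ν * β / π - 1 / 2 - t) - (ν * α / π + 1 / 2 - t) - 1 := by ring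
    _ ≤ _ := sub_sub_one_le_card_Icc_ceil_floor _ _
    _ ≤ _ := card_le_finsum_mem_of_injOn hfin
      (fun k hk => ⟨hZT k hk, (hdf0 _ (hTK (hZT k hk))).2 (hZ0 k hk)⟩)
      fun k hk k' hk' heq => eq_of_abs_sub_lt_of_abs_sub_lt hν (heq ▸ hZim k hk) (hZim k' hk')

theorem eventually_resonance_bounds {M δ C h : ℝ} (hM : 0 < M) (hδ : 0 < δ) (hh : 0 < h) :
    ∀ᶠ ν : ℝ in atTop, 0 < ν ∧ (ν ^ 2)⁻¹ < M ∧ M < ν ^ 2 ∧ π / (2 * ν) ≤ h ∧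
      2 * (ν ^ 2)⁻¹ + 2 * (C / ν) < M * (δ - 2 * (C / ν)) ∧
      2 * M ≤ ν ^ 2 * (δ - 2 * (C / ν)) := by
  have hsq : Tendsto (fun ν : ℝ => ν ^ 2) atTop atTop := tendsto_pow_atTop two_ne_zero
  have hsqinv : Tendsto (fun ν : ℝ => (ν ^ 2)⁻¹) atTop (𝓝 0) := tendsto_inv_atTop_zero.comp hsq
  have hdiv : ∀ c : ℝ, Tendsto (fun ν : ℝ => c / ν) atTop (𝓝 0) := fun c =>
    tendsto_const_nhds.div_atTop tendsto_id
  have hgap : Tendsto (fun ν : ℝ => δ - 2 * (C / ν)) atTop (𝓝 δ) := by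
    simpa using tendsto_const_nhds.sub ((hdiv C).const_mul 2)
  have hr : Tendsto (fun ν : ℝ => π / (2 * ν)) atTop (𝓝 0) :=
    tendsto_const_nhds.div_atTop (tendsto_id.const_mul_atTop two_pos)
  refine (eventually_gt_atTop 0).and <| (hsqinv.eventually_lt_const hM).and <|
    (hsq.eventually_gt_atTop M).and <| ((hr.eventually_lt_const hh).mono fun _ => le_of_lt).and <|
    Tendsto.eventually_lt ?_ (hgap.const_mul M) (by simpa using mul_pos hM hδ) |>.and <|
    (hsq.atTop_mul_pos hδ hgap).eventually_ge_atTop (2 * M)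
  simpa using (hsqinv.const_mul 2).add ((hdiv C).const_mul 2)

theorem stmt4_general (m : ℤ) (hm : m ≠ 0) (V₀ δ C₀ h : ℝ)
    (hV₀ : 0 < V₀) (hδ0 : 0 < δ)
    (hh0 : 0 < h) :
    ∃ ν₀ : ℝ, 0 < ν₀ ∧ ∀ ν : ℝ, ν₀ ≤ ν →
      ∀ (U : Set ℂ) (w g₁ g₃ : ℂ → ℂ),
        IsOpen U →
        {ρ : ℂ | -(2 * Real.log ν) / ν ≤ ρ.re ∧ ρ.re ≤ 0 ∧ -π ≤ ρ.im ∧ ρ.im ≤ 0} ⊆ U →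
        DifferentiableOn ℂ w U → DifferentiableOn ℂ g₁ U → DifferentiableOn ℂ g₃ U →
        (∀ ρ ∈ {ρ : ℂ | -(2 * Real.log ν) / ν ≤ ρ.re ∧ ρ.re ≤ 0 ∧ -π ≤ ρ.im ∧ ρ.im ≤ 0},
          ‖(w ρ) ^ 2‖ ≤ 1 - δ) →
        (∀ ρ ∈ {ρ : ℂ | -(2 * Real.log ν) / ν ≤ ρ.re ∧ ρ.re ≤ 0 ∧ -π ≤ ρ.im ∧ ρ.im ≤ 0},
          ‖g₁ ρ‖ ≤ C₀ / ν) →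
        (∀ ρ ∈ {ρ : ℂ | -(2 * Real.log ν) / ν ≤ ρ.re ∧ ρ.re ≤ 0 ∧ -π ≤ ρ.im ∧ ρ.im ≤ 0},
          ‖g₃ ρ‖ ≤ C₀ / ν) →
        ((∀ k : ℤ, (π / ν) * ((k : ℝ) + (Int.sign m : ℝ) / 4) ∈ Set.Ioo (-π + 2 * h) (-(2 * h)) →
            ∃ ρ : ℂ,
              (ν : ℂ) ^ 2 * (1 - (w ρ) ^ 2) * Complex.exp (2 * (ν : ℂ) * ρ) * (1 + g₁ ρ)
                  - Complex.I * (m : ℂ) * (V₀ : ℂ) / 4 - g₃ ρ = 0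
                ∧ -(2 * Real.log ν) / ν < ρ.re ∧ ρ.re < 0
                ∧ |ρ.im - (π / ν) * ((k : ℝ) + (Int.sign m : ℝ) / 4)| < π / ν)
          ∧ ∀ df : ℂ → ℕ,
              (∀ (z : ℂ) (hz : AnalyticAt ℂ (fun ρ : ℂ =>
                  (ν : ℂ) ^ 2 * (1 - (w ρ) ^ 2) * Complex.exp (2 * (ν : ℂ) * ρ) * (1 + g₁ ρ)
                    - Complex.I * (m : ℂ) * (V₀ : ℂ) / 4 - g₃ ρ) z),
                (df z : ℕ∞) = analyticOrderAt (fun ρ : ℂ =>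
                  (ν : ℂ) ^ 2 * (1 - (w ρ) ^ 2) * Complex.exp (2 * (ν : ℂ) * ρ) * (1 + g₁ ρ)
                    - Complex.I * (m : ℂ) * (V₀ : ℂ) / 4 - g₃ ρ) z) →
              ν * (π - 4 * h) / π - 2
                ≤ ∑ᶠ z ∈ {ρ : ℂ | -(2 * Real.log ν) / ν < ρ.re ∧ ρ.re < 0
                    ∧ -π + 2 * h < ρ.im ∧ ρ.im < -(2 * h)}, (df z : ℝ)) := by
  obtain ⟨ν₀, hν₀⟩ := (eventually_resonance_bounds (M := |(m : ℝ)| * V₀ / 4) (C := C₀)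
    (by positivity) hδ0 hh0).exists_forall_of_atTop
  refine ⟨max ν₀ 1, by positivity, fun ν hν U w g₁ g₃ hU hSU hw hg₁ hg₃ hwS hg₁S hg₃S => ?_⟩
  obtain ⟨hν0, hlo, hhi, hrh, hleft, hright⟩ := hν₀ ν (le_of_max_le_left hν)
  set S := {ρ : ℂ | -(2 * Real.log ν) / ν ≤ ρ.re ∧ ρ.re ≤ 0 ∧ -π ≤ ρ.im ∧ ρ.im ≤ 0}
  have key (k : ℤ) (hk₁ : -π ≤ π / ν * (k + (Int.sign m : ℝ) / 4) - π / (2 * ν))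
      (hk₂ : π / ν * (k + (Int.sign m : ℝ) / 4) + π / (2 * ν) ≤ 0) :=
    exists_zero_near_resonancePoint hm hV₀ hδ0.le hν0 hlo hhi hleft hright (hw.mono hSU)
      (hg₁.mono hSU) (hg₃.mono hSU) hwS hg₁S hg₃S k
      fun z ⟨⟨hre₁, hre₂⟩, him₁, him₂⟩ => ⟨hre₁, hre₂, by linarith, by linarith⟩
  have hr : π / (2 * ν) < π / ν := by gcongr; linarith
  refine ⟨fun k hk => ?_, fun df hdf => ?_⟩
  · obtain ⟨ρ, ⟨⟨hre₁, hre₂⟩, him₁, him₂⟩, h0⟩ := key k (by linarith [hk.1]) (by linarith [hk.2])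
    exact ⟨ρ, h0, hre₁, hre₂, abs_lt.2 ⟨by linarith, by linarith⟩⟩
  · have hS : S = Icc (-(2 * Real.log ν) / ν) 0 ×ℂ Icc (-π) 0 := by
      ext; simp only [S, mem_ofPred_eq, mem_reProdIm, mem_Icc, and_assoc]
    refine Eq.trans_le (by ring) (sub_two_le_finsum_of_zeros_near (α := -π + 2 * h) (β := -(2 * h))
      (t := (Int.sign m : ℝ) / 4) hν0 (hS ▸ isCompact_Icc.reProdIm isCompact_Icc)
      (by rintro z ⟨hre₁, hre₂, him₁, him₂⟩; exact ⟨hre₁.le, hre₂.le, by linarith, by linarith⟩)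
      (fun z hz => DifferentiableOn.analyticAt (by fun_prop) (hU.mem_nhds (hSU hz))) hdf
      fun k hk => ?_)
    obtain ⟨ρ, ⟨⟨hre₁, hre₂⟩, him₁, him₂⟩, h0⟩ := key k (by linarith [hk.1]) (by linarith [hk.2])
    exact ⟨ρ, ⟨hre₁, hre₂, by linarith [hk.1], by linarith [hk.2]⟩, h0,
      abs_lt.2 ⟨by linarith, by linarith⟩⟩

/-- Fix `m ∈ ℤ \ {0}`, `V₀ > 0`, `δ ∈ (0,1)`, `C₀ > 0`, `h ∈ (0, π/8)`.
There is `ν₀ > 0` such that for every `ν ≥ ν₀` the following holds.  Let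
`S_ν = {ρ : −(2 log ν)/ν ≤ Re ρ ≤ 0, −π ≤ Im ρ ≤ 0}`, and let `w, g₁, g₃` be holomorphic on
an open neighborhood `U` of `S_ν` with `|w(ρ)²| ≤ 1 − δ`, `|g₁(ρ)| ≤ C₀/ν`, `|g₃(ρ)| ≤ C₀/ν`
on `S_ν`.  Put `f(ρ) = ν² (1 − w(ρ)²) e^{2νρ} (1 + g₁(ρ)) − i m V₀/4 − g₃(ρ)`.  Then:
(i) for every `k ∈ ℤ` with `Im ρ_k = (π/ν)(k + sgn(m)/4) ∈ (−π + 2h, −2h)`, `f` has a zero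
`ρ` with `−(2 log ν)/ν < Re ρ < 0` and `|Im ρ − Im ρ_k| < π/ν`;
(ii) `f` has at least `ν(π − 4h)/π − 2` zeros, counted with multiplicity, in the open
rectangle `{−(2 log ν)/ν < Re ρ < 0, −π + 2h < Im ρ < −2h}` (the function `df : ℂ → ℕ`
records the vanishing order of `f`, so the count with multiplicity is the finite sum of
`df` over the rectangle). -/
theorem stmt4 (m : ℤ) (hm : m ≠ 0) (V₀ δ C₀ h : ℝ)
    (hV₀ : 0 < V₀) (hδ0 : 0 < δ) (hδ1 : δ < 1) (hC₀ : 0 < C₀)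
    (hh0 : 0 < h) (hh1 : h < π / 8) :
    ∃ ν₀ : ℝ, 0 < ν₀ ∧ ∀ ν : ℝ, ν₀ ≤ ν →
      ∀ (U : Set ℂ) (w g₁ g₃ : ℂ → ℂ),
        IsOpen U →
        {ρ : ℂ | -(2 * Real.log ν) / ν ≤ ρ.re ∧ ρ.re ≤ 0 ∧ -π ≤ ρ.im ∧ ρ.im ≤ 0} ⊆ U →
        DifferentiableOn ℂ w U → DifferentiableOn ℂ g₁ U → DifferentiableOn ℂ g₃ U →
        (∀ ρ ∈ {ρ : ℂ | -(2 * Real.log ν) / ν ≤ ρ.re ∧ ρ.re ≤ 0 ∧ -π ≤ ρ.im ∧ ρ.im ≤ 0},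
          ‖(w ρ) ^ 2‖ ≤ 1 - δ) →
        (∀ ρ ∈ {ρ : ℂ | -(2 * Real.log ν) / ν ≤ ρ.re ∧ ρ.re ≤ 0 ∧ -π ≤ ρ.im ∧ ρ.im ≤ 0},
          ‖g₁ ρ‖ ≤ C₀ / ν) →
        (∀ ρ ∈ {ρ : ℂ | -(2 * Real.log ν) / ν ≤ ρ.re ∧ ρ.re ≤ 0 ∧ -π ≤ ρ.im ∧ ρ.im ≤ 0},
          ‖g₃ ρ‖ ≤ C₀ / ν) →
        ((∀ k : ℤ, (π / ν) * ((k : ℝ) + (Int.sign m : ℝ) / 4) ∈ Set.Ioo (-π + 2 * h) (-(2 * h)) →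
            ∃ ρ : ℂ,
              (ν : ℂ) ^ 2 * (1 - (w ρ) ^ 2) * Complex.exp (2 * (ν : ℂ) * ρ) * (1 + g₁ ρ)
                  - Complex.I * (m : ℂ) * (V₀ : ℂ) / 4 - g₃ ρ = 0
                ∧ -(2 * Real.log ν) / ν < ρ.re ∧ ρ.re < 0
                ∧ |ρ.im - (π / ν) * ((k : ℝ) + (Int.sign m : ℝ) / 4)| < π / ν)
          ∧ ∀ df : ℂ → ℕ,
              (∀ (z : ℂ) (hz : AnalyticAt ℂ (fun ρ : ℂ =>
                  (ν : ℂ) ^ 2 * (1 - (w ρ) ^ 2) * Complex.exp (2 * (ν : ℂ) * ρ) * (1 + g₁ ρ)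
                    - Complex.I * (m : ℂ) * (V₀ : ℂ) / 4 - g₃ ρ) z),
                (df z : ℕ∞) = analyticOrderAt (fun ρ : ℂ =>
                  (ν : ℂ) ^ 2 * (1 - (w ρ) ^ 2) * Complex.exp (2 * (ν : ℂ) * ρ) * (1 + g₁ ρ)
                    - Complex.I * (m : ℂ) * (V₀ : ℂ) / 4 - g₃ ρ) z) →
              ν * (π - 4 * h) / π - 2
                ≤ ∑ᶠ z ∈ {ρ : ℂ | -(2 * Real.log ν) / ν < ρ.re ∧ ρ.re < 0
                    ∧ -π + 2 * h < ρ.im ∧ ρ.im < -(2 * h)}, (df z : ℝ)) :=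
  stmt4_general m hm V₀ δ C₀ h hV₀ hδ0 hh0
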